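/- Let A, B ∈ ℝ^{n×n} be symmetric matrices. Suppose V₀ ∈ ℝ^{n×p} and V ∈ ℝ^{n×q} have orthonormal columns and satisfy A V₀ = V₀ D₀ and B V = V D for diagonal matrices D₀ ∈ ℝ^{p×p} and D ∈ ℝ^{q×q} (so the columns of V₀ and V are eigenvectors of A and B, with eigenvalues on the diagonals of D₀ and D). If the smallest closed interval containing all diagonal entries of D₀ is disjoint from the smallest closed interval containing all diagonal entries of D, then ‖V₀ᵀ V‖_op ≤ ‖V₀ᵀ (B − A) V‖_op / min_{i≤p, j≤q} |(D₀)_{ii} − D_{jj}|. -/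

import Mathlib

open MeasureTheory ProbabilityTheory Filter Matrix
open scoped RealInnerProductSpace ENNReal NNReal Topology

noncomputable section

/-- The uniform probability measure on the centered sphere of radius `r` in `ℝ^d`:
the normalized `(d-1)`-dimensional Hausdorff measure on the sphere. -/
def sphereUniform (d : ℕ) (r : ℝ) : Measure (EuclideanSpace ℝ (Fin d)) :=
  (μH[(d : ℝ) - 1] (Metric.sphere (0 : EuclideanSpace ℝ (Fin d)) r))⁻¹ •
    (μH[(d : ℝ) - 1]).restrict (Metric.sphere (0 : EuclideanSpace ℝ (Fin d)) r)

/-- Euclidean norm of a finite real vector. -/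
def eNorm {ι : Type*} [Fintype ι] (v : ι → ℝ) : ℝ := Real.sqrt (∑ i, v i ^ 2)

/-- `ℓ²`-operator norm of a real matrix. -/
def opNorm {ι κ : Type*} [Fintype ι] [Fintype κ] (M : Matrix ι κ ℝ) : ℝ :=
  sSup {r | ∃ v : κ → ℝ, eNorm v ≤ 1 ∧ r = eNorm (M.mulVec v)}

/-- Smallest eigenvalue of a symmetric matrix (infimum of the Rayleigh quotient). -/
def lambdaMin {ι : Type*} [Fintype ι] (M : Matrix ι ι ℝ) : ℝ :=
  sInf {r | ∃ v : ι → ℝ, eNorm v = 1 ∧ r = v ⬝ᵥ M.mulVec v}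

/-- Smallest singular value (as `inf_{‖v‖=1} ‖Mv‖`, appropriate for tall matrices). -/
def sMin {ι κ : Type*} [Fintype ι] [Fintype κ] (M : Matrix ι κ ℝ) : ℝ :=
  sInf {r | ∃ v : κ → ℝ, eNorm v = 1 ∧ r = eNorm (M.mulVec v)}

/-- Orthonormalized probabilists' Hermite polynomial `h_k`. -/
def hermiteFn (k : ℕ) (x : ℝ) : ℝ :=
  Polynomial.aeval x (Polynomial.hermite k) / Real.sqrt (Nat.factorial k)

/-- Hermite coefficient `μ_k(g) = E[g(G) h_k(G)]` for `G ~ N(0,1)`. -/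
def hermiteCoeff (g : ℝ → ℝ) (k : ℕ) : ℝ :=
  ∫ x, g x * hermiteFn k x ∂(gaussianReal 0 1)

/-- `v(σ) := Σ_{k ≥ ℓ} μ_k(σ')²`. -/
def vSigma (ℓ : ℕ) (g : ℝ → ℝ) : ℝ := ∑' k : ℕ, hermiteCoeff g (ℓ + k) ^ 2

/-- Polynomial growth: `|g(x)| ≤ B (1 + |x|)^B`. -/
def PolyGrowth (B : ℝ) (g : ℝ → ℝ) : Prop := ∀ x : ℝ, |g x| ≤ B * (1 + |x|) ^ B

/-- `g` is a weak derivative of `f`. -/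
def IsWeakDeriv (f g : ℝ → ℝ) : Prop :=
  ∀ φ : ℝ → ℝ, ContDiff ℝ (⊤ : ℕ∞) φ → HasCompactSupport φ →
    ∫ x, f x * deriv φ x = - ∫ x, g x * φ x

/-- Assumption on the relative sizes of `n` and `d`. -/
def AssumpND (ℓ : ℕ) (c₀ C₀ : ℝ) (d n : ℕ) : Prop :=
  if ℓ = 1 then
    c₀ * (d : ℝ) ≤ (n : ℝ) ∧ (n : ℝ) ≤ (d : ℝ) ^ 2 / Real.log d ^ C₀
  else
    (d : ℝ) ^ ℓ * Real.log d ^ C₀ ≤ (n : ℝ) ∧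
      (n : ℝ) ≤ (d : ℝ) ^ (ℓ + 1) / Real.log d ^ C₀

/-- Finite-width neural tangent kernel. -/
def ntKernel (σ' : ℝ → ℝ) {d N : ℕ} (ws : Fin N → EuclideanSpace ℝ (Fin d))
    (x y : EuclideanSpace ℝ (Fin d)) : ℝ :=
  (∑ k, σ' ⟪x, ws k⟫ * σ' ⟪y, ws k⟫) * ⟪x, y⟫ / ((N : ℝ) * (d : ℝ))

/-- Empirical neural tangent kernel matrix `K_N`. -/
def ntKernelMatrix (σ' : ℝ → ℝ) {d n N : ℕ} (xs : Fin n → EuclideanSpace ℝ (Fin d))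
    (ws : Fin N → EuclideanSpace ℝ (Fin d)) : Matrix (Fin n) (Fin n) ℝ :=
  Matrix.of fun i j => ntKernel σ' ws (xs i) (xs j)

/-- Infinite-width neural tangent kernel. -/
def infKernel (σ' : ℝ → ℝ) (d : ℕ) (x y : EuclideanSpace ℝ (Fin d)) : ℝ :=
  (∫ w, σ' ⟪x, w⟫ * σ' ⟪y, w⟫ ∂sphereUniform d 1) * ⟪x, y⟫ / (d : ℝ)

/-- Infinite-width kernel matrix `K`. -/
def infKernelMatrix (σ' : ℝ → ℝ) {d n : ℕ} (xs : Fin n → EuclideanSpace ℝ (Fin d)) :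
    Matrix (Fin n) (Fin n) ℝ :=
  Matrix.of fun i j => infKernel σ' d (xs i) (xs j)

/-- NT featurization matrix `Φ ∈ ℝ^{n × Nd}`. -/
def featureMatrix (σ' : ℝ → ℝ) {d n N : ℕ} (xs : Fin n → EuclideanSpace ℝ (Fin d))
    (ws : Fin N → EuclideanSpace ℝ (Fin d)) : Matrix (Fin n) (Fin N × Fin d) ℝ :=
  Matrix.of fun i p => (1 / Real.sqrt ((N : ℝ) * (d : ℝ))) * σ' ⟪xs i, ws p.1⟫ * xs i p.2

/-- Data matrix with rows `xᵢᵀ`. -/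
def XmatOf {d n : ℕ} (xs : Fin n → EuclideanSpace ℝ (Fin d)) : Matrix (Fin n) (Fin d) ℝ :=
  Matrix.of fun i j => xs i j

open Classical in
/-- Inverse square root of a positive semidefinite matrix. -/
def invSqrt {n : ℕ} (M : Matrix (Fin n) (Fin n) ℝ) : Matrix (Fin n) (Fin n) ℝ :=
  if h : M.PosSemidef then
    ((h.1.eigenvectorUnitary : Matrix (Fin n) (Fin n) ℝ) *
      Matrix.diagonal ((RCLike.ofReal : ℝ → ℝ) ∘ (Real.sqrt ·) ∘ h.1.eigenvalues) *
      (star h.1.eigenvectorUnitary : Matrix (Fin n) (Fin n) ℝ))⁻¹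
  else 0

/-- First coordinate of a Euclidean vector. -/
def coord0 {d : ℕ} (x : EuclideanSpace ℝ (Fin d)) : ℝ := if h : 0 < d then x ⟨0, h⟩ else 0

/-- The law of `√d ⟨x, e₁⟩` for `x` uniform on the sphere of radius `√d`. -/
def gegMeasure (d : ℕ) : Measure ℝ :=
  Measure.map (fun x : EuclideanSpace ℝ (Fin d) => Real.sqrt d * coord0 x)
    (sphereUniform d (Real.sqrt d))

/-- `Q` is the degree-`k` Gegenbauer polynomial in dimension `d`. -/
def IsGegenbauer (d k : ℕ) (Q : Polynomial ℝ) : Prop :=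
  Q.natDegree = k ∧ Q.eval (d : ℝ) = 1 ∧
    ∀ R : Polynomial ℝ, R.natDegree < k → ∫ t, Q.eval t * R.eval t ∂gegMeasure d = 0

/-- Normalizing constant `B(d,k) = 1/E[Q_k(√d⟨x,e₁⟩)²]`. -/
def gegNormConst (d : ℕ) (Q : Polynomial ℝ) : ℝ := (∫ t, Q.eval t ^ 2 ∂gegMeasure d)⁻¹

/-- Gegenbauer coefficient `λ_{d,k}(g) = E[g(⟨x,e₁⟩) Q_k(√d⟨x,e₁⟩)]`. -/
def gegCoeff (d : ℕ) (g : ℝ → ℝ) (Q : Polynomial ℝ) : ℝ :=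
  ∫ t, g (t / Real.sqrt d) * Q.eval t ∂gegMeasure d

/-- Gegenbauer coefficients `γ_k` of the infinite-width kernel. -/
def gammaCoeff (d : ℕ) (σ' : ℝ → ℝ) (Qf : ℕ → Polynomial ℝ) : ℕ → ℝ
  | 0 => gegCoeff d σ' (Qf 1) ^ 2
  | k + 1 =>
      (((k : ℝ) + 2) / (2 * ((k : ℝ) + 1) + d)) * gegNormConst d (Qf (k + 2)) *
          gegCoeff d σ' (Qf (k + 2)) ^ 2 +
        (((k : ℝ) + 1 + (d : ℝ) - 3) / (2 * ((k : ℝ) + 1) + (d : ℝ) - 4)) *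
          gegNormConst d (Qf k) * gegCoeff d σ' (Qf k) ^ 2

/-- Tail sum `γ_{>ℓ} = Σ_{k > ℓ} γ_k`. -/
def gammaTail (d ℓ : ℕ) (σ' : ℝ → ℝ) (Qf : ℕ → Polynomial ℝ) : ℝ :=
  ∑' k : ℕ, gammaCoeff d σ' Qf (ℓ + 1 + k)

/-- Truncated (degree-`ℓ`) polynomial kernel `K^p`. -/
def polyKernel (d : ℕ) (σ' : ℝ → ℝ) (Qf : ℕ → Polynomial ℝ) (ℓ : ℕ)
    (x y : EuclideanSpace ℝ (Fin d)) : ℝ :=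
  ∑ k ∈ Finset.range (ℓ + 1), gammaCoeff d σ' Qf k * (Qf k).eval ⟪x, y⟫

/-- Kernel matrix of a kernel function on the data. -/
def kernelMatrix {d n : ℕ} (Kf : EuclideanSpace ℝ (Fin d) → EuclideanSpace ℝ (Fin d) → ℝ)
    (xs : Fin n → EuclideanSpace ℝ (Fin d)) : Matrix (Fin n) (Fin n) ℝ :=
  Matrix.of fun i j => Kf (xs i) (xs j)

/-- Kernel evaluation vector `K(·,x₀)`. -/
def kernelVec {d n : ℕ} (Kf : EuclideanSpace ℝ (Fin d) → EuclideanSpace ℝ (Fin d) → ℝ)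
    (xs : Fin n → EuclideanSpace ℝ (Fin d)) (x₀ : EuclideanSpace ℝ (Fin d)) : Fin n → ℝ :=
  fun i => Kf (xs i) x₀

/-- Ridge resolventM `(γ I + K)⁻¹`. -/
def resolventM {d n : ℕ} (Kf : EuclideanSpace ℝ (Fin d) → EuclideanSpace ℝ (Fin d) → ℝ)
    (xs : Fin n → EuclideanSpace ℝ (Fin d)) (γ : ℝ) : Matrix (Fin n) (Fin n) ℝ :=
  (γ • (1 : Matrix (Fin n) (Fin n) ℝ) + kernelMatrix Kf xs)⁻¹

/-- Test error of kernel ridge regression with kernel `Kf` and ridge parameter `γ`. -/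
def krrRisk {d n : ℕ} (f : EuclideanSpace ℝ (Fin d) → ℝ)
    (Kf : EuclideanSpace ℝ (Fin d) → EuclideanSpace ℝ (Fin d) → ℝ)
    (xs : Fin n → EuclideanSpace ℝ (Fin d)) (y : Fin n → ℝ) (γ : ℝ) : ℝ :=
  ∫ x₀, (f x₀ - kernelVec Kf xs x₀ ⬝ᵥ (resolventM Kf xs γ).mulVec y) ^ 2
    ∂sphereUniform d (Real.sqrt d)

/-- Bias term of the generalization-error decomposition. -/
def EBias {d n : ℕ} (f : EuclideanSpace ℝ (Fin d) → ℝ)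
    (Kf : EuclideanSpace ℝ (Fin d) → EuclideanSpace ℝ (Fin d) → ℝ)
    (xs : Fin n → EuclideanSpace ℝ (Fin d)) (γ : ℝ) : ℝ :=
  ∫ x₀, (f x₀ - kernelVec Kf xs x₀ ⬝ᵥ (resolventM Kf xs γ).mulVec fun i => f (xs i)) ^ 2
    ∂sphereUniform d (Real.sqrt d)

/-- Second-moment kernel matrix `E_{x₀}[K(·,x₀)K(·,x₀)ᵀ]`. -/
def kernelSq {d n : ℕ} (Kf : EuclideanSpace ℝ (Fin d) → EuclideanSpace ℝ (Fin d) → ℝ)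
    (xs : Fin n → EuclideanSpace ℝ (Fin d)) : Matrix (Fin n) (Fin n) ℝ :=
  Matrix.of fun i j => ∫ x₀, Kf (xs i) x₀ * Kf (xs j) x₀ ∂sphereUniform d (Real.sqrt d)

/-- Variance term of the generalization-error decomposition. -/
def EVar {d n : ℕ} (Kf : EuclideanSpace ℝ (Fin d) → EuclideanSpace ℝ (Fin d) → ℝ)
    (xs : Fin n → EuclideanSpace ℝ (Fin d)) (γ : ℝ) (ε : Fin n → ℝ) : ℝ :=
  ε ⬝ᵥ (resolventM Kf xs γ * kernelSq Kf xs * resolventM Kf xs γ).mulVec ε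

/-- Cross term of the generalization-error decomposition. -/
def ECross {d n : ℕ} (f : EuclideanSpace ℝ (Fin d) → ℝ)
    (Kf : EuclideanSpace ℝ (Fin d) → EuclideanSpace ℝ (Fin d) → ℝ)
    (xs : Fin n → EuclideanSpace ℝ (Fin d)) (γ : ℝ) (ε : Fin n → ℝ) : ℝ :=
  ε ⬝ᵥ (resolventM Kf xs γ).mulVec fun i =>
    ∫ x₀, Kf (xs i) x₀ *
        (f x₀ - kernelVec Kf xs x₀ ⬝ᵥ (resolventM Kf xs γ).mulVec fun j => f (xs j))
      ∂sphereUniform d (Real.sqrt d)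

/-- Ridge regression estimator over linear features. -/
def ridgeBeta {d n : ℕ} (xs : Fin n → EuclideanSpace ℝ (Fin d)) (y : Fin n → ℝ) (γ : ℝ) :
    Fin d → ℝ :=
  ((XmatOf xs)ᵀ * XmatOf xs + (γ * (d : ℝ)) • (1 : Matrix (Fin d) (Fin d) ℝ))⁻¹.mulVec
    ((XmatOf xs)ᵀ.mulVec y)

/-- Test error of ridge regression over linear features. -/
def RlinRisk {d n : ℕ} (β : EuclideanSpace ℝ (Fin d)) (xs : Fin n → EuclideanSpace ℝ (Fin d))
    (y : Fin n → ℝ) (γ : ℝ) : ℝ :=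
  ∫ x₀, (⟪β, x₀⟫ - ridgeBeta xs y γ ⬝ᵥ fun j => x₀ j) ^ 2 ∂sphereUniform d (Real.sqrt d)

/-- The Rademacher (uniform `±1`) law on `ℝ`. -/
def rademacher : Measure ℝ := ((1 : ℝ≥0∞) / 2) • (Measure.dirac (-1) + Measure.dirac 1)

/-- Second-layer signs `b_k`. -/
def signCoeff {N : ℕ} (k : Fin N ⊕ Fin N) : ℝ := Sum.elim (fun _ => (1 : ℝ)) (fun _ => -1) k

/-- Two-layer network with fixed `±1` second layer and scale `α`. -/
def fNN (σ : ℝ → ℝ) (α : ℝ) {d N : ℕ}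
    (Wt : EuclideanSpace ℝ ((Fin N ⊕ Fin N) × Fin d)) (x : EuclideanSpace ℝ (Fin d)) : ℝ :=
  (α / Real.sqrt N) * ∑ k : Fin N ⊕ Fin N, signCoeff k * σ (∑ j, Wt (k, j) * x j)

/-- Empirical risk of the two-layer network. -/
def empRisk (σ : ℝ → ℝ) (α : ℝ) {d N n : ℕ} (xs : Fin n → EuclideanSpace ℝ (Fin d))
    (y : Fin n → ℝ) (Wt : EuclideanSpace ℝ ((Fin N ⊕ Fin N) × Fin d)) : ℝ :=
  (1 / (n : ℝ)) * ∑ i, (y i - fNN σ α Wt (xs i)) ^ 2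

/-- Symmetric initialization `w̃_k⁰ = w̃_{N+k}⁰ = w_k`. -/
def initW {d N : ℕ} (ws : Fin N → EuclideanSpace ℝ (Fin d)) :
    EuclideanSpace ℝ ((Fin N ⊕ Fin N) × Fin d) :=
  (WithLp.equiv 2 (((Fin N ⊕ Fin N) × Fin d) → ℝ)).symm
    fun p => ws (Sum.elim id id p.1) p.2

/-- Neural tangent model `f_NT(x; a, W)`. -/
def fNT (σ' : ℝ → ℝ) {d N : ℕ} (ws : Fin N → EuclideanSpace ℝ (Fin d))
    (a : Fin N × Fin d → ℝ) (x : EuclideanSpace ℝ (Fin d)) : ℝ :=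
  (1 / Real.sqrt N) * ∑ k, (∑ j, a (k, j) * x j) * σ' ⟪x, ws k⟫

/-- Subgaussian law with constant `C`. -/
def IsSubgaussianLaw (C : ℝ) (ν : Measure ℝ) : Prop :=
  ∀ t : ℝ, ∫ x, Real.exp (t * x) ∂ν ≤ Real.exp (C * t ^ 2)

/-- `Ψ = [1ₙ, X]`. -/
def PsiMat {d n : ℕ} (X : Fin n → EuclideanSpace ℝ (Fin d)) :
    Matrix (Fin n) (Fin (d + 1)) ℝ :=
  Matrix.of fun i j => Fin.cases (motive := fun _ => ℝ) 1 (fun j' => X i j') j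

/-- The grid `{j/M : j ∈ ℤ}`. -/
def Dgrid (M : ℕ) : Set ℝ := {x | ∃ j : ℤ, x = (j : ℝ) / (M : ℝ)}

/-- The kernel `H₁`. -/
def H1fun (σ' : ℝ → ℝ) (d : ℕ) (g : EuclideanSpace ℝ (Fin d) → ℝ)
    (x x' : EuclideanSpace ℝ (Fin d)) : ℝ :=
  ∫ w, (∫ z₁, (∫ z₂,
        σ' ⟪x, w⟫ * σ' ⟪z₁, w⟫ * σ' ⟪x', w⟫ * σ' ⟪z₂, w⟫ *
          (⟪x, z₁⟫ / (d : ℝ)) * (⟪x', z₂⟫ / (d : ℝ)) * g z₁ * g z₂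
      ∂sphereUniform d (Real.sqrt d)) ∂sphereUniform d (Real.sqrt d)) ∂sphereUniform d 1

/-- The kernel `H₃`. -/
def H3fun (σ' : ℝ → ℝ) (d : ℕ) (x x' : EuclideanSpace ℝ (Fin d)) : ℝ :=
  ∫ w, (∫ z,
        σ' ⟪x, w⟫ * σ' ⟪x', w⟫ * σ' ⟪z, w⟫ ^ 2 *
          (⟪x, z⟫ / (d : ℝ)) * (⟪x', z⟫ / (d : ℝ))
      ∂sphereUniform d (Real.sqrt d)) ∂sphereUniform d 1

/-!
With `S = V₀ᵀ V`, the eigen-relations turn `V₀ᵀ (B - A) V` into the Sylvester expression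
`S D - D₀ S`. Suppose `D₀ ≤ a` and `D ≥ a + δ`. A unit vector `w` maximising `‖S x‖` on the unit
sphere is an eigenvector of `SᵀS`, with eigenvalue `μ = ‖S w‖²` dominating every `‖S v‖²`, so
`⟪S w, (S D - D₀ S) w⟫ = μ ⟪D w, w⟫ - ⟪D₀ S w, S w⟫ ≥ δ μ`, while Cauchy–Schwarz bounds the same
inner product by `√μ ‖S D - D₀ S‖`. The opposite ordering of the spectra follows by negating both.
-/

namespace ContinuousLinearMap

variable {X Y : Type*} [NormedAddCommGroup X] [InnerProductSpace ℝ X]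
  [NormedAddCommGroup Y] [InnerProductSpace ℝ Y] [CompleteSpace Y]

theorem exists_eigenvector_adjoint_comp_self_norm_apply_le [FiniteDimensional ℝ X]
    (S : X →L[ℝ] Y) {v : X} (hv : ‖v‖ = 1) :
    ∃ w : X, ‖w‖ = 1 ∧ ‖S v‖ ≤ ‖S w‖ ∧ ∃ μ : ℝ, (adjoint S ∘L S) w = μ • w := by
  have hsq : ∀ x, (adjoint S ∘L S).reApplyInnerSelf x = ‖S x‖ ^ 2 := fun x => by
    rw [reApplyInnerSelf_apply, apply_norm_sq_eq_inner_adjoint_left]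
  obtain ⟨w, hw, hmax⟩ := (isCompact_sphere (0 : X) 1).exists_isMaxOn ⟨v, by simpa using hv⟩
    (adjoint S ∘L S).reApplyInnerSelf_continuous.continuousOn
  have hw1 : ‖w‖ = 1 := by simpa using hw
  refine ⟨w, hw1, ?_, _, ((isPositive_adjoint_comp_self S).isSelfAdjoint.hasEigenvector_of_isMaxOn
    (norm_ne_zero_iff.1 (by simp [hw1])) (by rwa [hw1])).apply_eq_smul⟩
  have := hmax (show v ∈ Metric.sphere (0 : X) 1 by simpa using hv)
  rw [Set.mem_ofPred_eq, hsq, hsq] at this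
  exact (pow_le_pow_iff_left₀ (norm_nonneg _) (norm_nonneg _) two_ne_zero).1 this

theorem mul_norm_apply_le_norm_comp_sub_comp [CompleteSpace X] (S : X →L[ℝ] Y)
    (P : X →L[ℝ] X) (Q : Y →L[ℝ] Y) {a δ μ : ℝ} (hP : ∀ x, (a + δ) * ‖x‖ ^ 2 ≤ ⟪P x, x⟫)
    (hQ : ∀ y, ⟪Q y, y⟫ ≤ a * ‖y‖ ^ 2) {w : X} (hw : ‖w‖ = 1) (hSw : (adjoint S ∘L S) w = μ • w) :
    δ * ‖S w‖ ≤ ‖S ∘L P - Q ∘L S‖ := by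
  have hμ : ‖S w‖ ^ 2 = μ := by
    rw [apply_norm_sq_eq_inner_adjoint_left, hSw, real_inner_smul_left, real_inner_self_eq_norm_sq,
      hw]
    simp
  have hlow : δ * ‖S w‖ ^ 2 ≤ ⟪S w, (S ∘L P - Q ∘L S) w⟫ := by
    have hSP : ⟪S w, S (P w)⟫ = μ * ⟪P w, w⟫ := by
      rw [← adjoint_inner_left, ← comp_apply, hSw, real_inner_smul_left, real_inner_comm]
    have hPw : a + δ ≤ ⟪P w, w⟫ := by simpa [hw] using hP w
    have hQSw : ⟪Q (S w), S w⟫ ≤ a * μ := hμ ▸ hQ (S w)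
    have hμ0 : 0 ≤ μ := hμ ▸ sq_nonneg _
    rw [_root_.sub_apply, inner_sub_right, comp_apply, comp_apply, hSP,
      real_inner_comm (Q (S w)), hμ]
    nlinarith
  have hup : ⟪S w, (S ∘L P - Q ∘L S) w⟫ ≤ ‖S w‖ * ‖S ∘L P - Q ∘L S‖ := by
    calc _ ≤ ‖S w‖ * ‖(S ∘L P - Q ∘L S) w‖ := real_inner_le_norm _ _
      _ ≤ ‖S w‖ * ‖S ∘L P - Q ∘L S‖ := by
        gcongr; simpa [hw] using (S ∘L P - Q ∘L S).le_opNorm w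
  rcases (norm_nonneg (S w)).eq_or_lt with h0 | hpos
  · rw [← h0, mul_zero]; exact norm_nonneg _
  · nlinarith

theorem opNorm_le_norm_comp_sub_comp_div [FiniteDimensional ℝ X] (S : X →L[ℝ] Y)
    (P : X →L[ℝ] X) (Q : Y →L[ℝ] Y) {a δ : ℝ} (hδ : 0 < δ)
    (hP : ∀ x, (a + δ) * ‖x‖ ^ 2 ≤ ⟪P x, x⟫) (hQ : ∀ y, ⟪Q y, y⟫ ≤ a * ‖y‖ ^ 2) :
    ‖S‖ ≤ ‖S ∘L P - Q ∘L S‖ / δ := by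
  refine opNorm_le_of_unit_norm (by positivity) fun v hv => ?_
  obtain ⟨w, hw, hvw, μ, hSw⟩ := exists_eigenvector_adjoint_comp_self_norm_apply_le S hv
  rw [le_div_iff₀' hδ]
  exact (mul_le_mul_of_nonneg_left hvw hδ.le).trans
    (mul_norm_apply_le_norm_comp_sub_comp S P Q hP hQ hw hSw)

end ContinuousLinearMap

section L2OpNorm

open scoped Matrix.Norms.L2Operator

namespace Matrix

variable {m n : Type*} [Fintype m] [Fintype n] [DecidableEq m] [DecidableEq n]

theorem inner_toEuclideanLin_diagonal_self (d : n → ℝ) (x : EuclideanSpace ℝ n) :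
    ⟪toEuclideanLin (diagonal d) x, x⟫ = ∑ i, d i * x i ^ 2 := by
  simp [PiLp.inner_apply, toLpLin_apply, mulVec_diagonal, sq, mul_left_comm]

theorem mul_norm_sq_le_inner_toEuclideanLin_diagonal {d : n → ℝ} {b : ℝ} (h : ∀ i, b ≤ d i)
    (x : EuclideanSpace ℝ n) : b * ‖x‖ ^ 2 ≤ ⟪toEuclideanLin (diagonal d) x, x⟫ := by
  rw [inner_toEuclideanLin_diagonal_self, EuclideanSpace.real_norm_sq_eq, Finset.mul_sum]
  exact Finset.sum_le_sum fun i _ => by gcongr; exact h i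

theorem inner_toEuclideanLin_diagonal_le {d : n → ℝ} {b : ℝ} (h : ∀ i, d i ≤ b)
    (x : EuclideanSpace ℝ n) : ⟪toEuclideanLin (diagonal d) x, x⟫ ≤ b * ‖x‖ ^ 2 := by
  rw [inner_toEuclideanLin_diagonal_self, EuclideanSpace.real_norm_sq_eq, Finset.mul_sum]
  exact Finset.sum_le_sum fun i _ => by gcongr; exact h i

theorem l2_opNorm_le_div_of_forall_le (S : Matrix m n ℝ) {d₀ : m → ℝ} {d : n → ℝ} {a δ : ℝ}
    (hδ : 0 < δ) (h₀ : ∀ i, d₀ i ≤ a) (h : ∀ j, a + δ ≤ d j) :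
    ‖S‖ ≤ ‖S * diagonal d - diagonal d₀ * S‖ / δ := by
  simp only [l2_opNorm_def, LinearEquiv.trans_apply]
  convert ContinuousLinearMap.opNorm_le_norm_comp_sub_comp_div _
    (LinearMap.toContinuousLinearMap (toEuclideanLin (diagonal d)))
    (LinearMap.toContinuousLinearMap (toEuclideanLin (diagonal d₀))) hδ
    (mul_norm_sq_le_inner_toEuclideanLin_diagonal h) (inner_toEuclideanLin_diagonal_le h₀) using 3
  ext1 x
  simp [toLpLin_apply, mulVec_mulVec]

theorem l2_opNorm_le_div_sInf_of_lt (S : Matrix m n ℝ) {d₀ : m → ℝ} {d : n → ℝ}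
    (hlt : ∀ i j, d₀ i < d j) :
    ‖S‖ ≤ ‖S * diagonal d - diagonal d₀ * S‖ / sInf {r | ∃ i j, r = |d₀ i - d j|} := by
  have hbdd : ∀ r ∈ {r | ∃ i j, r = |d₀ i - d j|}, 0 ≤ r := by
    rintro r ⟨i, j, rfl⟩
    exact abs_nonneg _
  have hrhs := div_nonneg (norm_nonneg (S * diagonal d - diagonal d₀ * S)) (Real.sInf_nonneg hbdd)
  rcases isEmpty_or_nonempty m with _ | _
  · exact (norm_le_zero_iff.2 (Subsingleton.elim S 0)).trans hrhs
  rcases isEmpty_or_nonempty n with _ | _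
  · exact (norm_le_zero_iff.2 (Subsingleton.elim S 0)).trans hrhs
  obtain ⟨i₀, hi₀⟩ := Finite.exists_max d₀
  obtain ⟨j₀, hj₀⟩ := Finite.exists_min d
  have habs : ∀ i j, |d₀ i - d j| = d j - d₀ i := fun i j => by
    rw [abs_sub_comm, abs_of_pos (sub_pos.2 (hlt i j))]
  have hδ : 0 < sInf {r | ∃ i j, r = |d₀ i - d j|} := by
    refine (sub_pos.2 (hlt i₀ j₀)).trans_le (le_csInf ⟨_, i₀, j₀, rfl⟩ ?_)
    rintro r ⟨i, j, rfl⟩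
    linarith [habs i j, hi₀ i, hj₀ j]
  refine l2_opNorm_le_div_of_forall_le S hδ hi₀ fun j => ?_
  linarith [habs i₀ j, csInf_le ⟨0, hbdd⟩ ⟨i₀, j, rfl⟩]

theorem l2_opNorm_le_div_sInf_of_gt (S : Matrix m n ℝ) {d₀ : m → ℝ} {d : n → ℝ}
    (hgt : ∀ i j, d j < d₀ i) :
    ‖S‖ ≤ ‖S * diagonal d - diagonal d₀ * S‖ / sInf {r | ∃ i j, r = |d₀ i - d j|} := by
  convert l2_opNorm_le_div_sInf_of_lt S (d₀ := fun i => -d₀ i) (d := fun j => -d j)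
    (fun i j => neg_lt_neg (hgt i j)) using 2
  · rw [← diagonal_neg, ← diagonal_neg, Matrix.mul_neg, Matrix.neg_mul, neg_sub_neg,
      norm_sub_rev]
  · simp_rw [neg_sub_neg, abs_sub_comm]

theorem transpose_mul_sub_mul_eq {k : Type*} [Fintype k] {A B : Matrix k k ℝ} {V₀ : Matrix k m ℝ}
    {V : Matrix k n ℝ} {d₀ : m → ℝ} {d : n → ℝ} (hA : Aᵀ = A)
    (hAV₀ : A * V₀ = V₀ * diagonal d₀) (hBV : B * V = V * diagonal d) :
    V₀ᵀ * (B - A) * V = V₀ᵀ * V * diagonal d - diagonal d₀ * (V₀ᵀ * V) := by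
  have hV₀A : V₀ᵀ * A = diagonal d₀ * V₀ᵀ := by
    rw [← hA, ← transpose_mul, hAV₀, transpose_mul, diagonal_transpose]
  rw [Matrix.mul_sub, Matrix.sub_mul, hV₀A, Matrix.mul_assoc, hBV, Matrix.mul_assoc,
    Matrix.mul_assoc]

end Matrix

theorem eNorm_eq_norm {ι : Type*} [Fintype ι] (v : ι → ℝ) : eNorm v = ‖WithLp.toLp 2 v‖ := by
  simp [eNorm, EuclideanSpace.norm_eq]

theorem opNorm_eq_l2_opNorm {ι κ : Type*} [Fintype ι] [Fintype κ] [DecidableEq κ]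
    (M : Matrix ι κ ℝ) : opNorm M = ‖M‖ := by
  rw [l2_opNorm_def, ← ContinuousLinearMap.sSup_unitClosedBall_eq_norm, opNorm]
  congr 1
  ext r
  constructor
  · rintro ⟨v, hv, rfl⟩
    exact ⟨WithLp.toLp 2 v, by simpa [← eNorm_eq_norm] using hv,
      by simp [eNorm_eq_norm, toLpLin_apply]⟩
  · rintro ⟨x, hx, rfl⟩
    exact ⟨x.ofLp, by simpa [eNorm_eq_norm] using hx, by simp [eNorm_eq_norm, toLpLin_apply]⟩

end L2OpNorm

theorem eigenvector_block_perturbation_general {n p q : ℕ} (A B : Matrix (Fin n) (Fin n) ℝ)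
    (hA : Aᵀ = A)
    (V₀ : Matrix (Fin n) (Fin p) ℝ) (V : Matrix (Fin n) (Fin q) ℝ)
    (d₀ : Fin p → ℝ) (dd : Fin q → ℝ)
    (hAV₀ : A * V₀ = V₀ * Matrix.diagonal d₀) (hBV : B * V = V * Matrix.diagonal dd)
    (hsep : (∀ i j, d₀ i < dd j) ∨ (∀ i j, dd j < d₀ i)) :
    opNorm (V₀ᵀ * V) ≤
      opNorm (V₀ᵀ * (B - A) * V) / sInf {r | ∃ i j, r = |d₀ i - dd j|} := by
  rw [opNorm_eq_l2_opNorm, opNorm_eq_l2_opNorm, Matrix.transpose_mul_sub_mul_eq hA hAV₀ hBV]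
  rcases hsep with hlt | hgt
  · exact l2_opNorm_le_div_sInf_of_lt _ hlt
  · exact l2_opNorm_le_div_sInf_of_gt _ hgt

/-- the eigenvector perturbation bound, Eq. (7.11) of the paper:
a Davis–Kahan type bound for eigenvector blocks of two symmetric matrices whose
corresponding eigenvalue intervals are separated. -/
theorem eigenvector_block_perturbation {n p q : ℕ} (A B : Matrix (Fin n) (Fin n) ℝ)
    (hA : Aᵀ = A) (hB : Bᵀ = B)
    (V₀ : Matrix (Fin n) (Fin p) ℝ) (V : Matrix (Fin n) (Fin q) ℝ)
    (hV₀ : V₀ᵀ * V₀ = 1) (hV : Vᵀ * V = 1)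
    (d₀ : Fin p → ℝ) (dd : Fin q → ℝ)
    (hAV₀ : A * V₀ = V₀ * Matrix.diagonal d₀) (hBV : B * V = V * Matrix.diagonal dd)
    (hsep : (∀ i j, d₀ i < dd j) ∨ (∀ i j, dd j < d₀ i)) :
    opNorm (V₀ᵀ * V) ≤
      opNorm (V₀ᵀ * (B - A) * V) / sInf {r | ∃ i j, r = |d₀ i - dd j|} :=
  eigenvector_block_perturbation_general A B hA V₀ V d₀ dd hAV₀ hBV hsep

end
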